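/- Let d ≥ 3, let f ∈ L^{2d/(d+2)}(ℝ^d) be nonnegative, and define the inversion f̂(x) := |x|^{-(d+2)} f(x/|x|²) for x ≠ 0. Then ‖f̂‖_{2d/(d+2)} = ‖f‖_{2d/(d+2)}, ∬_{ℝ^d×ℝ^d} f̂(x)f̂(y)|x−y|^{-(d-2)} dx dy = ∬_{ℝ^d×ℝ^d} f(x)f(y)|x−y|^{-(d-2)} dx dy, and consequently F[f̂] = F[f]. -/

import Mathlib

/-! The inversion `x ↦ x / ‖x‖²` is an involution of `ℝⁿ \ {0}` with Jacobian determinant of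
absolute value `‖x‖ ^ (-2n)`, and it scales distances by `‖x - y‖ / (‖x‖ ‖y‖)`. Substituting it
into `∫ |f|^p` and into the Riesz double integral with kernel `‖x - y‖ ^ (-s)` shows that
`f̂ = ‖x‖ ^ (-a) · f (x / ‖x‖²)` has the same `Lᵖ` norm as `f` when `a p = 2n`, and the same double
integral when `a + s = 2n`. For `n = d`, `p = 2d/(d+2)`, `a = d + 2`, `s = d - 2` both hold. -/

open MeasureTheory Real
open scoped ENNReal

noncomputable section

/-- Euclidean space `ℝ^d`. -/
abbrev E (d : ℕ) := EuclideanSpace ℝ (Fin d)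

/-- Surface measure of the unit sphere `S^{n-1} ⊆ ℝ^n`, i.e. `2 π^{n/2} / Γ(n/2)`. -/
def unitSphereArea (n : ℕ) : ℝ :=
  2 * Real.pi ^ ((n : ℝ) / 2) / Real.Gamma ((n : ℝ) / 2)

/-- The sharp constant `C_S = (4/(d(d-2))) |S^d|^{-2/d}`, where `|S^d|` is the surface
measure of the unit sphere in `ℝ^{d+1}`. -/
def CS (d : ℕ) : ℝ :=
  (4 / ((d : ℝ) * ((d : ℝ) - 2))) * unitSphereArea (d + 1) ^ (-(2 : ℝ) / (d : ℝ))

/-- The exponent `2d/(d+2)` as an element of `ℝ≥0∞`. -/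
def pHLS (d : ℕ) : ℝ≥0∞ := ENNReal.ofReal (2 * (d : ℝ) / ((d : ℝ) + 2))

/-- The HLS double integral `∬ f(x) f(y) |x-y|^{-(d-2)} dx dy`, well defined in `[0,∞]`
for nonnegative `f`. -/
def hlsI (d : ℕ) (f : E d → ℝ) : ℝ≥0∞ :=
  ∫⁻ x : E d, ∫⁻ y : E d, ENNReal.ofReal (f x * f y * ‖x - y‖ ^ (-((d : ℝ) - 2)))

/-- The HLS functional
`F[f] = C_S ‖f‖_{2d/(d+2)}² − (1/((d-2)|S^{d-1}|)) ∬ f(x) f(y) |x-y|^{-(d-2)} dx dy`. -/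
def hlsF (d : ℕ) (f : E d → ℝ) : ℝ :=
  CS d * ((eLpNorm f (pHLS d) volume).toReal) ^ 2
    - (1 / (((d : ℝ) - 2) * unitSphereArea d)) * (hlsI d f).toReal

open EuclideanGeometry Module

section Inversion

variable {F : Type*} [NormedAddCommGroup F] [InnerProductSpace ℝ F]

theorem inversion_zero_one (x : F) : inversion (0 : F) 1 x = (‖x‖ ^ 2)⁻¹ • x := by
  simp [inversion_def, dist_eq_norm, one_div, inv_pow]

theorem norm_inversion_sub_rpow_neg {x y : F} (hx : x ≠ 0) (hy : y ≠ 0) (s : ℝ) :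
    ‖(‖x‖ ^ 2)⁻¹ • x - (‖y‖ ^ 2)⁻¹ • y‖ ^ (-s) = ‖x‖ ^ s * ‖y‖ ^ s * ‖x - y‖ ^ (-s) := by
  have hdist := dist_inversion_inversion hx hy 1
  simp only [inversion_zero_one, dist_eq_norm, sub_zero, one_pow] at hdist
  have hxy : 0 < ‖x‖ * ‖y‖ := by positivity
  rw [hdist, Real.mul_rpow (by positivity) (norm_nonneg _), one_div, Real.inv_rpow hxy.le,
    ← Real.rpow_neg hxy.le, neg_neg, Real.mul_rpow (norm_nonneg x) (norm_nonneg y)]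

variable [FiniteDimensional ℝ F]

theorem abs_det_fderiv_inversion_zero_one {x : F} (hx : x ≠ 0) :
    |(fderiv ℝ (inversion (0 : F) 1) x).det| = ‖x‖ ^ (-(2 * finrank ℝ F : ℝ)) := by
  rw [(hasFDerivAt_inversion hx).fderiv, ContinuousLinearMap.det,
    ContinuousLinearMap.toLinearMap_smul, LinearMap.det_smul]
  erw [Submodule.det_reflection]
  simp only [abs_mul, abs_pow, abs_neg, abs_one, one_pow, mul_one, dist_zero_right, one_div,
    abs_inv, abs_norm]
  rw [Real.rpow_neg (norm_nonneg x), ← pow_mul, inv_pow, ← Real.rpow_natCast]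
  norm_cast

variable [MeasurableSpace F] [BorelSpace F] [Nontrivial F] (μ : Measure F) [μ.IsAddHaarMeasure]

theorem lintegral_eq_lintegral_inversion (g : F → ℝ≥0∞) :
    ∫⁻ x, g x ∂μ =
      ∫⁻ x, ENNReal.ofReal (‖x‖ ^ (-(2 * finrank ℝ F : ℝ))) * g ((‖x‖ ^ 2)⁻¹ • x) ∂μ := by
  have hinv : Function.Involutive (inversion (0 : F) 1) := inversion_involutive 0 one_ne_zero
  have himage : inversion (0 : F) 1 '' {0}ᶜ = {0}ᶜ := by
    ext y
    simp [hinv.image_eq_preimage_symm]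
  have hderiv : ∀ x ∈ ({0}ᶜ : Set F),
      HasFDerivWithinAt (inversion (0 : F) 1) (fderiv ℝ (inversion (0 : F) 1) x) {0}ᶜ x :=
    fun x hx => (hasFDerivAt_inversion hx).differentiableAt.hasFDerivAt.hasFDerivWithinAt
  calc ∫⁻ x, g x ∂μ = ∫⁻ x in inversion (0 : F) 1 '' {0}ᶜ, g x ∂μ := by
        rw [himage, restrict_compl_singleton]
    _ = ∫⁻ x in {0}ᶜ, ENNReal.ofReal (‖x‖ ^ (-(2 * finrank ℝ F : ℝ)))
          * g ((‖x‖ ^ 2)⁻¹ • x) ∂μ := by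
        rw [lintegral_image_eq_lintegral_abs_det_fderiv_mul μ (measurableSet_singleton 0).compl
          hderiv hinv.injective.injOn]
        refine setLIntegral_congr_fun (measurableSet_singleton 0).compl fun x hx => ?_
        rw [abs_det_fderiv_inversion_zero_one hx, inversion_zero_one]
    _ = _ := by rw [restrict_compl_singleton]

variable {f g : F → ℝ}

theorem eLpNorm_eq_of_inversion {p : ℝ≥0∞} (hp0 : p ≠ 0) (hp : p ≠ ⊤) {a : ℝ}
    (ha : a * p.toReal = 2 * finrank ℝ F)
    (hg : ∀ x ≠ 0, g x = ‖x‖ ^ (-a) * f ((‖x‖ ^ 2)⁻¹ • x)) :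
    eLpNorm g p μ = eLpNorm f p μ := by
  have hp_pos : 0 < p.toReal := ENNReal.toReal_pos hp0 hp
  rw [eLpNorm_eq_lintegral_rpow_enorm_toReal hp0 hp, eLpNorm_eq_lintegral_rpow_enorm_toReal hp0 hp,
    lintegral_eq_lintegral_inversion μ (fun x => ‖f x‖ₑ ^ p.toReal)]
  congr 1
  refine lintegral_congr_ae ?_
  filter_upwards [Measure.ae_ne μ 0] with x hx
  rw [hg x hx, enorm_mul, ENNReal.mul_rpow_of_nonneg _ _ hp_pos.le, Real.enorm_of_nonneg
    (by positivity), ENNReal.ofReal_rpow_of_nonneg (by positivity) hp_pos.le,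
    ← Real.rpow_mul (norm_nonneg x), neg_mul, ha]

theorem lintegral_lintegral_riesz_eq_of_inversion {a s : ℝ} (has : a + s = 2 * finrank ℝ F)
    (hg : ∀ x ≠ 0, g x = ‖x‖ ^ (-a) * f ((‖x‖ ^ 2)⁻¹ • x)) :
    ∫⁻ x, ∫⁻ y, ENNReal.ofReal (g x * g y * ‖x - y‖ ^ (-s)) ∂μ ∂μ =
      ∫⁻ x, ∫⁻ y, ENNReal.ofReal (f x * f y * ‖x - y‖ ^ (-s)) ∂μ ∂μ := by
  set jac : F → ℝ≥0∞ := fun x => ENNReal.ofReal (‖x‖ ^ (-(2 * finrank ℝ F : ℝ)))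
  have hweight {x : F} (hx : x ≠ 0) : ‖x‖ ^ (-(2 * finrank ℝ F : ℝ)) = ‖x‖ ^ (-a) * ‖x‖ ^ (-s) := by
    rw [← Real.rpow_add (norm_pos_iff.2 hx), ← has]
    ring_nf
  symm
  calc ∫⁻ x, ∫⁻ y, ENNReal.ofReal (f x * f y * ‖x - y‖ ^ (-s)) ∂μ ∂μ
      = ∫⁻ x, jac x *
          ∫⁻ y, ENNReal.ofReal (f ((‖x‖ ^ 2)⁻¹ • x) * f y * ‖(‖x‖ ^ 2)⁻¹ • x - y‖ ^ (-s)) ∂μ ∂μ :=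
        lintegral_eq_lintegral_inversion μ _
    _ = ∫⁻ x, ∫⁻ y, jac x * (jac y * ENNReal.ofReal (f ((‖x‖ ^ 2)⁻¹ • x) * f ((‖y‖ ^ 2)⁻¹ • y) *
          ‖(‖x‖ ^ 2)⁻¹ • x - (‖y‖ ^ 2)⁻¹ • y‖ ^ (-s))) ∂μ ∂μ :=
        lintegral_congr fun x => by
          rw [lintegral_eq_lintegral_inversion μ, lintegral_const_mul' _ _ ENNReal.ofReal_ne_top]
    _ = ∫⁻ x, ∫⁻ y, ENNReal.ofReal (g x * g y * ‖x - y‖ ^ (-s)) ∂μ ∂μ := by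
        refine lintegral_congr_ae ?_
        filter_upwards [Measure.ae_ne μ 0] with x hx
        refine lintegral_congr_ae ?_
        filter_upwards [Measure.ae_ne μ 0] with y hy
        rw [← ENNReal.ofReal_mul (by positivity), ← ENNReal.ofReal_mul (by positivity),
          norm_inversion_sub_rpow_neg hx hy, hweight hx, hweight hy, hg x hx, hg y hy]
        congr 1
        have hx₀ : 0 < ‖x‖ ^ s := Real.rpow_pos_of_pos (norm_pos_iff.2 hx) s
        have hy₀ : 0 < ‖y‖ ^ s := Real.rpow_pos_of_pos (norm_pos_iff.2 hy) s
        rw [Real.rpow_neg (norm_nonneg x) s, Real.rpow_neg (norm_nonneg y) s]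
        field_simp

end Inversion

theorem stmt15_general (d : ℕ) (hd : 3 ≤ d) (f : E d → ℝ)
    (fhat : E d → ℝ)
    (hfhat : ∀ x : E d, x ≠ 0 → fhat x = ‖x‖ ^ (-((d : ℝ) + 2)) * f ((‖x‖ ^ 2)⁻¹ • x)) :
    eLpNorm fhat (pHLS d) volume = eLpNorm f (pHLS d) volume ∧
      hlsI d fhat = hlsI d f ∧
      hlsF d fhat = hlsF d f := by
  have : Nonempty (Fin d) := ⟨⟨0, by omega⟩⟩
  have hp_pos : 0 < 2 * (d : ℝ) / (d + 2) := by positivity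
  have hp : (pHLS d).toReal = 2 * d / (d + 2) := ENNReal.toReal_ofReal hp_pos.le
  have hnorm : eLpNorm fhat (pHLS d) volume = eLpNorm f (pHLS d) volume := by
    refine eLpNorm_eq_of_inversion volume (ENNReal.ofReal_pos.2 hp_pos).ne' ENNReal.ofReal_ne_top
      ?_ hfhat
    rw [hp, finrank_euclideanSpace_fin]
    field_simp
  have hI : hlsI d fhat = hlsI d f :=
    lintegral_lintegral_riesz_eq_of_inversion volume
      (by rw [finrank_euclideanSpace_fin]; ring) hfhat
  exact ⟨hnorm, hI, by simp only [hlsF, hnorm, hI]⟩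

/-- **Conformal inversion invariance of the HLS functional**: with
`f̂(x) = |x|^{-(d+2)} f(x/|x|²)` (for `x ≠ 0`), the `L^{2d/(d+2)}` norm, the HLS double
integral, and hence the HLS functional `F` are unchanged. -/
theorem stmt15 (d : ℕ) (hd : 3 ≤ d) (f : E d → ℝ) (hf : ∀ x, 0 ≤ f x)
    (hmem : MemLp f (pHLS d) volume)
    (fhat : E d → ℝ)
    (hfhat : ∀ x : E d, x ≠ 0 → fhat x = ‖x‖ ^ (-((d : ℝ) + 2)) * f ((‖x‖ ^ 2)⁻¹ • x))
    (hfhat0 : fhat 0 = 0) :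
    eLpNorm fhat (pHLS d) volume = eLpNorm f (pHLS d) volume ∧
      hlsI d fhat = hlsI d f ∧
      hlsF d fhat = hlsF d f :=
  stmt15_general d hd f fhat hfhat

end
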